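/- Let r ≥ 3 be an integer and let u₁, u_{r−1}, u_r ∈ ℂ. Set q' = u_r·ε_{r,1} + (u_{r−1}/2)·(ε_{r−1,1} + ε_{r,2}) + (u₁/r)·Id. Then Tr(q'² · L_{r−1}) = (2/r)·u₁·u_{r−1}, and for every integer j with 1 ≤ j ≤ r−3, Tr(q' · L_{j+1} · q' · L_{r−j−1}) = (2/r)·u₁·u_{r−1}. (These trace identities give the quadratic part (r−1)/r · u¹u^{r−1} of the restricted invariant z^r.) -/
import Mathlib


open Matrix

set_option maxHeartbeats 1000000

/-- `L_i = Σ_{k=1}^{r−i+1} ε_{k,i−1+k}` (1-based `i`, 0-based matrix indexing). -/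
noncomputable def LMat (r i : ℕ) : Matrix (Fin r) (Fin r) ℂ :=
  Matrix.of fun a b => if (b : ℕ) = (a : ℕ) + (i - 1) then 1 else 0

/-- `q' = u_r·ε_{r,1} + (u_{r−1}/2)·(ε_{r−1,1} + ε_{r,2}) + (u₁/r)·Id` (1-based indices). -/
noncomputable def qPrime (r : ℕ) (u1 urm1 ur : ℂ) : Matrix (Fin r) (Fin r) ℂ :=
  Matrix.of fun a b =>
    (if (a : ℕ) = r - 1 ∧ (b : ℕ) = 0 then ur else 0) +
    (if ((a : ℕ) = r - 2 ∧ (b : ℕ) = 0) ∨ ((a : ℕ) = r - 1 ∧ (b : ℕ) = 1) then urm1 / 2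
     else 0) +
    (if a = b then u1 / r else 0)

lemma sum_ite_coe {r m : ℕ} (f : Fin r → ℂ) :
    ∑ c : Fin r, (if (c:ℕ) = m then f c else 0) =
    if h : m < r then f ⟨m, h⟩ else 0 := by
  split
  · next h =>
    rw [Finset.sum_eq_single (⟨m, h⟩ : Fin r)]
    · simp
    · intro b _ hb; rw [if_neg]; simpa [Fin.ext_iff] using hb
    · simp
  · next h =>
    apply Finset.sum_eq_zero
    intro c _
    rw [if_neg]; omega

lemma quad (r m1 m2 m3 m4 : ℕ) (h1 : m1 < r) (h2 : m2 < r) (h3 : m3 < r) (h4 : m4 < r) (w : ℂ) :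
    (∑ a : Fin r, ∑ b : Fin r, ∑ c : Fin r, ∑ d : Fin r,
      if (a:ℕ) = m1 ∧ (b:ℕ) = m2 ∧ (c:ℕ) = m3 ∧ (d:ℕ) = m4 then w else 0) = w := by
  simp only [ite_and, Finset.sum_ite_irrel, Finset.sum_const_zero, sum_ite_coe]
  rw [dif_pos h1, dif_pos h2, dif_pos h3, dif_pos h4]

lemma point (r j : ℕ) (hr : 3 ≤ r) (hj : j + 2 ≤ r) (u1 urm1 ur : ℂ) (a b c d : Fin r) :
    qPrime r u1 urm1 ur a d * (if (c:ℕ) = (d:ℕ) + j then (1:ℂ) else 0) *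
      qPrime r u1 urm1 ur c b * (if (a:ℕ) = (b:ℕ) + (r - j - 2) then (1:ℂ) else 0) =
    (if (a:ℕ) = r-2 ∧ (b:ℕ) = j ∧ (c:ℕ) = j ∧ (d:ℕ) = 0 then u1/r*(urm1/2) else 0) +
    (if (a:ℕ) = r-1 ∧ (b:ℕ) = j+1 ∧ (c:ℕ) = j+1 ∧ (d:ℕ) = 1 then u1/r*(urm1/2) else 0) +
    (if (a:ℕ) = r-2-j ∧ (b:ℕ) = 0 ∧ (c:ℕ) = r-2 ∧ (d:ℕ) = r-2-j then u1/r*(urm1/2) else 0) +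
    (if (a:ℕ) = r-1-j ∧ (b:ℕ) = 1 ∧ (c:ℕ) = r-1 ∧ (d:ℕ) = r-1-j then u1/r*(urm1/2) else 0) := by
  have ha := a.isLt; have hb := b.isLt; have hc := c.isLt; have hd := d.isLt
  by_cases h2 : (a:ℕ) = (b:ℕ) + (r-j-2)
  · by_cases h1 : (c:ℕ) = (d:ℕ) + j
    · rw [if_pos h1, if_pos h2, mul_one, mul_one]
      simp only [qPrime, Matrix.of_apply, Fin.ext_iff]
      have T1 : (if (a:ℕ) = r - 1 ∧ (d:ℕ) = 0 then ur else 0) *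
          ((if (c:ℕ) = r-1 ∧ (b:ℕ) = 0 then ur else 0) +
           (if ((c:ℕ) = r-2 ∧ (b:ℕ) = 0) ∨ ((c:ℕ) = r-1 ∧ (b:ℕ) = 1) then urm1/2 else 0) +
           (if (c:ℕ) = (b:ℕ) then u1/r else 0)) = 0 := by
        by_cases hP : (a:ℕ) = r - 1 ∧ (d:ℕ) = 0
        · rw [if_pos hP, if_neg (by omega), if_neg (by omega), if_neg (by omega)]
          ring
        · rw [if_neg hP, zero_mul]
      have T2 : (if ((a:ℕ) = r-2 ∧ (d:ℕ) = 0) ∨ ((a:ℕ) = r-1 ∧ (d:ℕ) = 1) then urm1/2 else 0) *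
          ((if (c:ℕ) = r-1 ∧ (b:ℕ) = 0 then ur else 0) +
           (if ((c:ℕ) = r-2 ∧ (b:ℕ) = 0) ∨ ((c:ℕ) = r-1 ∧ (b:ℕ) = 1) then urm1/2 else 0) +
           (if (c:ℕ) = (b:ℕ) then u1/r else 0)) =
          (if (a:ℕ) = r-2 ∧ (b:ℕ) = j ∧ (c:ℕ) = j ∧ (d:ℕ) = 0 then u1/r*(urm1/2) else 0) +
          (if (a:ℕ) = r-1 ∧ (b:ℕ) = j+1 ∧ (c:ℕ) = j+1 ∧ (d:ℕ) = 1 then u1/r*(urm1/2) else 0) := by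
        by_cases hP : ((a:ℕ) = r-2 ∧ (d:ℕ) = 0) ∨ ((a:ℕ) = r-1 ∧ (d:ℕ) = 1)
        · rw [if_pos hP, if_neg (by omega), if_neg (by omega)]
          split_ifs <;> first | (exfalso; omega) | ring
        · rw [if_neg hP, zero_mul, if_neg (by omega), if_neg (by omega)]
          ring
      have T3 : (if (a:ℕ) = (d:ℕ) then u1/r else 0) *
          ((if (c:ℕ) = r-1 ∧ (b:ℕ) = 0 then ur else 0) +
           (if ((c:ℕ) = r-2 ∧ (b:ℕ) = 0) ∨ ((c:ℕ) = r-1 ∧ (b:ℕ) = 1) then urm1/2 else 0) +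
           (if (c:ℕ) = (b:ℕ) then u1/r else 0)) =
          (if (a:ℕ) = r-2-j ∧ (b:ℕ) = 0 ∧ (c:ℕ) = r-2 ∧ (d:ℕ) = r-2-j then u1/r*(urm1/2) else 0) +
          (if (a:ℕ) = r-1-j ∧ (b:ℕ) = 1 ∧ (c:ℕ) = r-1 ∧ (d:ℕ) = r-1-j then u1/r*(urm1/2) else 0) := by
        by_cases hP : (a:ℕ) = (d:ℕ)
        · rw [if_pos hP, if_neg (show ¬((c:ℕ) = r-1 ∧ (b:ℕ) = 0) by omega),
            if_neg (show ¬((c:ℕ) = (b:ℕ)) by omega)]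
          split_ifs <;> first | (exfalso; omega) | ring
        · rw [if_neg hP, zero_mul, if_neg (by omega), if_neg (by omega)]
          ring
      rw [add_mul, add_mul, T1, T2, T3]
      ring
    · rw [if_neg h1, mul_zero, zero_mul]
      symm
      split_ifs <;> first | (exfalso; omega) | ring
  · rw [if_neg h2, mul_zero]
    symm
    split_ifs <;> first | (exfalso; omega) | ring

lemma key (r j : ℕ) (hr : 3 ≤ r) (hj : j + 2 ≤ r) (u1 urm1 ur : ℂ) :
    (qPrime r u1 urm1 ur * LMat r (j + 1) * qPrime r u1 urm1 ur * LMat r (r - j - 1)).trace =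
      2 / (r : ℂ) * u1 * urm1 := by
  have hs : r - j - 1 - 1 = r - j - 2 := by omega
  simp only [Matrix.trace, Matrix.diag, Matrix.mul_apply, LMat, Matrix.of_apply,
    Nat.add_sub_cancel, hs]
  simp only [Finset.sum_mul]
  rw [Finset.sum_congr rfl (fun a _ => Finset.sum_congr rfl (fun b _ =>
      Finset.sum_congr rfl (fun c _ => Finset.sum_congr rfl (fun d _ =>
      point r j hr hj u1 urm1 ur a b c d))))]
  simp only [Finset.sum_add_distrib]
  rw [quad r _ _ _ _ (by omega) (by omega) (by omega) (by omega),
      quad r _ _ _ _ (by omega) (by omega) (by omega) (by omega),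
      quad r _ _ _ _ (by omega) (by omega) (by omega) (by omega),
      quad r _ _ _ _ (by omega) (by omega) (by omega) (by omega)]
  have hrc : (r:ℂ) ≠ 0 := Nat.cast_ne_zero.mpr (by omega)
  field_simp
  ring

lemma LMat_one (r : ℕ) : LMat r 1 = 1 := by
  ext a b
  simp only [LMat, Matrix.of_apply, Matrix.one_apply, Nat.sub_self, Nat.add_zero]
  by_cases h : (b:ℕ) = (a:ℕ)
  · rw [if_pos h, if_pos (Fin.ext h.symm)]
  · rw [if_neg h, if_neg fun hh => h (by rw [hh])]

/-- `Tr(q'² L_{r−1}) = (2/r)u₁u_{r−1}` and, for `1 ≤ j ≤ r−3`,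
`Tr(q' L_{j+1} q' L_{r−j−1}) = (2/r)u₁u_{r−1}`. -/
theorem quadratic_trace_identities (r : ℕ) (hr : 3 ≤ r) (u1 urm1 ur : ℂ) :
    (qPrime r u1 urm1 ur * qPrime r u1 urm1 ur * LMat r (r - 1)).trace =
      (2 / (r : ℂ)) * u1 * urm1 ∧
    (∀ j : ℕ, 1 ≤ j → j ≤ r - 3 →
      (qPrime r u1 urm1 ur * LMat r (j + 1) * qPrime r u1 urm1 ur *
          LMat r (r - j - 1)).trace = (2 / (r : ℂ)) * u1 * urm1) := by
  constructor
  · have h0 := key r 0 hr (by omega) u1 urm1 ur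
    rw [LMat_one, mul_one, Nat.sub_zero] at h0
    exact h0
  · intro j hj1 hj3
    exact key r j hr (by omega) u1 urm1 ur
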